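/- Let A and B be disjoint sets and f a real-valued function of two finite-set arguments. Define g(X) = f(X ∩ A, X ∩ B). Then for every finite set X, the lower difference of g satisfies ǧ(X) = f̌(X ∩ A, X ∩ B) if X ⊆ A ∪ B, and ǧ(X) = 0 otherwise, where f̌(U, V) = Σ_{S ⊆ U, T ⊆ V} (-1)^{|U \ S| + |V \ T|} f(S, T). -/
import Mathlib

open Finset

lemma union_inter_eq_self {α : Type*} [DecidableEq α] {Z u v : Finset α}
    (hZ : Z ⊆ u ∪ v) : Z ∩ u ∪ Z ∩ v = Z := by
  rw [← Finset.inter_union_distrib_left]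
  exact Finset.inter_eq_left.2 hZ

lemma sum_powerset_union_disjoint {α : Type*} [DecidableEq α] {M : Type*} [AddCommMonoid M]
    (u v : Finset α) (h : Disjoint u v) (F : Finset α → M) :
    ∑ Z ∈ (u ∪ v).powerset, F Z = ∑ S ∈ u.powerset, ∑ T ∈ v.powerset, F (S ∪ T) := by
  rw [← Finset.sum_product']
  refine Finset.sum_bij' (fun Z _ => (Z ∩ u, Z ∩ v)) (fun p _ => p.1 ∪ p.2) ?_ ?_ ?_ ?_ ?_
  · intro Z hZ
    simp only [Finset.mem_product, Finset.mem_powerset]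
    exact ⟨Finset.inter_subset_right, Finset.inter_subset_right⟩
  · intro p hp
    rw [Finset.mem_product, Finset.mem_powerset, Finset.mem_powerset] at hp
    exact Finset.mem_powerset.2 (Finset.union_subset_union hp.1 hp.2)
  · intro Z hZ
    exact union_inter_eq_self (Finset.mem_powerset.1 hZ)
  · intro p hp
    rw [Finset.mem_product, Finset.mem_powerset, Finset.mem_powerset] at hp
    have h1 : p.1 ∩ u = p.1 := Finset.inter_eq_left.2 hp.1
    have h2 : p.2 ∩ u = ∅ := Finset.disjoint_iff_inter_eq_empty.1 (h.symm.mono_left hp.2)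
    have h3 : p.1 ∩ v = ∅ := Finset.disjoint_iff_inter_eq_empty.1 (h.mono_left hp.1)
    have h4 : p.2 ∩ v = p.2 := Finset.inter_eq_left.2 hp.2
    rw [Prod.ext_iff]
    refine ⟨?_, ?_⟩
    · show (p.1 ∪ p.2) ∩ u = p.1
      rw [Finset.union_inter_distrib_right, h1, h2, Finset.union_empty]
    · show (p.1 ∪ p.2) ∩ v = p.2
      rw [Finset.union_inter_distrib_right, h3, h4, Finset.empty_union]
  · intro Z hZ
    rw [union_inter_eq_self (Finset.mem_powerset.1 hZ)]

lemma alt_sum {α : Type*} [DecidableEq α] (R : Finset α) :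
    ∑ W ∈ R.powerset, (-1 : ℝ) ^ (R.card - W.card) = if R = ∅ then 1 else 0 := by
  have h1 : ∑ W ∈ R.powerset, (-1 : ℝ) ^ (R.card - W.card)
      = ∑ W ∈ R.powerset, (-1 : ℝ) ^ W.card := by
    refine Finset.sum_bij' (fun W _ => R \ W) (fun W _ => R \ W) ?_ ?_ ?_ ?_ ?_
    · intro W hW; exact Finset.mem_powerset.2 (Finset.sdiff_subset)
    · intro W hW; exact Finset.mem_powerset.2 (Finset.sdiff_subset)
    · intro W hW; exact Finset.sdiff_sdiff_eq_self (Finset.mem_powerset.1 hW)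
    · intro W hW; exact Finset.sdiff_sdiff_eq_self (Finset.mem_powerset.1 hW)
    · intro W hW; rw [Finset.card_sdiff_of_subset (Finset.mem_powerset.1 hW)]
  rw [h1]
  have h2 := @Finset.sum_powerset_neg_one_pow_card α _ R
  have h3 : ((∑ m ∈ R.powerset, (-1 : ℤ) ^ m.card : ℤ) : ℝ)
      = ∑ W ∈ R.powerset, (-1 : ℝ) ^ W.card := by push_cast; rfl
  rw [← h3, h2]
  split <;> norm_num

/-- Lower difference of `X ↦ f (X ∩ A) (X ∩ B)` for disjoint `A`, `B`. -/
theorem lowerDiff_inter_two {α : Type*} [DecidableEq α] (f : Finset α → Finset α → ℝ)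
    (A B : Finset α) (hAB : Disjoint A B) (X : Finset α) :
    ∑ Z ∈ X.powerset, (-1 : ℝ) ^ (X.card - Z.card) * f (Z ∩ A) (Z ∩ B) =
      if X ⊆ A ∪ B then
        ∑ S ∈ (X ∩ A).powerset, ∑ T ∈ (X ∩ B).powerset,
          (-1 : ℝ) ^ (((X ∩ A).card - S.card) + ((X ∩ B).card - T.card)) * f S T
      else 0 := by
  classical
  set P := X ∩ A with hP
  set Q := X ∩ B with hQ
  set R := X \ (A ∪ B) with hR
  have hPQ : Disjoint P Q := hAB.mono inter_subset_right inter_subset_right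
  have hPR : Disjoint P R := by
    refine Finset.disjoint_left.2 fun x hx hx' => ?_
    simp [hP, hR] at hx hx'
    exact hx'.2.1 hx.2
  have hQR : Disjoint Q R := by
    refine Finset.disjoint_left.2 fun x hx hx' => ?_
    simp [hQ, hR] at hx hx'
    exact hx'.2.2 hx.2
  have hX : X = P ∪ Q ∪ R := by
    ext x
    simp [hP, hQ, hR]
    tauto
  have hDisj : Disjoint (P ∪ Q) R := (Finset.disjoint_union_left).2 ⟨hPR, hQR⟩
  have hcard : X.card = P.card + Q.card + R.card := by
    rw [hX, Finset.card_union_of_disjoint hDisj, Finset.card_union_of_disjoint hPQ]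
  conv_lhs => rw [hX]
  rw [sum_powerset_union_disjoint _ _ hDisj, ]
  rw [sum_powerset_union_disjoint _ _ hPQ, ← hX]
  have key : ∀ S ∈ P.powerset, ∀ T ∈ Q.powerset, ∀ W ∈ R.powerset,
      (-1 : ℝ) ^ (X.card - (S ∪ T ∪ W).card) * f ((S ∪ T ∪ W) ∩ A) ((S ∪ T ∪ W) ∩ B)
      = ((-1 : ℝ) ^ ((P.card - S.card) + (Q.card - T.card)) * f S T) * (-1 : ℝ) ^ (R.card - W.card) := by
    intro S hS T hT W hW
    rw [Finset.mem_powerset] at hS hT hW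
    have hSA : S ⊆ A := hS.trans inter_subset_right
    have hTB : T ⊆ B := hT.trans inter_subset_right
    have hWA : Disjoint W A := Finset.disjoint_left.2 fun x hx hx' => by
      have := hW hx; simp [hR] at this; exact this.2.1 hx'
    have hWB : Disjoint W B := Finset.disjoint_left.2 fun x hx hx' => by
      have := hW hx; simp [hR] at this; exact this.2.2 hx'
    have hiA : (S ∪ T ∪ W) ∩ A = S := by
      rw [Finset.union_inter_distrib_right, Finset.union_inter_distrib_right,
        Finset.inter_eq_left.2 hSA, Finset.disjoint_iff_inter_eq_empty.1 (hAB.symm.mono_left hTB),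
        Finset.disjoint_iff_inter_eq_empty.1 hWA, Finset.union_empty, Finset.union_empty]
    have hiB : (S ∪ T ∪ W) ∩ B = T := by
      rw [Finset.union_inter_distrib_right, Finset.union_inter_distrib_right,
        Finset.inter_eq_left.2 hTB, Finset.disjoint_iff_inter_eq_empty.1 (hAB.mono_left hSA),
        Finset.disjoint_iff_inter_eq_empty.1 hWB, Finset.union_empty, Finset.empty_union]
    have hcZ : (S ∪ T ∪ W).card = S.card + T.card + W.card := by
      rw [Finset.card_union_of_disjoint, Finset.card_union_of_disjoint (hPQ.mono hS hT)]
      exact Finset.disjoint_union_left.2 ⟨hPR.mono hS hW, hQR.mono hT hW⟩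
    have hSc : S.card ≤ P.card := Finset.card_le_card hS
    have hTc : T.card ≤ Q.card := Finset.card_le_card hT
    have hWc : W.card ≤ R.card := Finset.card_le_card hW
    have hexp : X.card - (S ∪ T ∪ W).card
        = ((P.card - S.card) + (Q.card - T.card)) + (R.card - W.card) := by
      rw [hcZ, hcard]; omega
    rw [hiA, hiB, hexp, pow_add]
    ring
  rw [Finset.sum_congr rfl fun S hS => Finset.sum_congr rfl fun T hT =>
    Finset.sum_congr rfl fun W hW => key S hS T hT W hW]
  simp_rw [← Finset.mul_sum, alt_sum]
  have hiff : (X ⊆ A ∪ B) ↔ R = ∅ := by rw [hR, Finset.sdiff_eq_empty_iff_subset]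
  by_cases h : X ⊆ A ∪ B
  · simp [h, hiff.1 h]
  · have hR0 : ¬ R = ∅ := fun he => h (hiff.2 he)
    simp [h, hR0]
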